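/- For every integer n ≥ 1 and every p ∈ I_n, the split ratios of p and of its flip satisfy s_p + s_{f(p)} = 1. -/
import Mathlib


open Matrix

noncomputable section

/-- `M1 = [[1,1,0],[0,1,0],[0,0,1]]`. -/
def M1 : Matrix (Fin 3) (Fin 3) ℝ := !![1, 1, 0; 0, 1, 0; 0, 0, 1]

/-- `M2 = [[1,0,0],[1,1,1],[0,0,1]]`. -/
def M2 : Matrix (Fin 3) (Fin 3) ℝ := !![1, 0, 0; 1, 1, 1; 0, 0, 1]

/-- `M3 = [[1,0,0],[0,1,0],[0,1,1]]`. -/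
def M3 : Matrix (Fin 3) (Fin 3) ℝ := !![1, 0, 0; 0, 1, 0; 0, 1, 1]

/- A tuple `p = (p_n, p_n', q_n, …, p_1, p_1', q_1) ∈ ℕ₀^{3n}` is encoded by three
functions `P P' Q : Fin n → ℕ`, where the index `i : Fin n` corresponds to the
subscript `i + 1` (so `P ⟨0,_⟩ = p_1`, …, `P ⟨n-1,_⟩ = p_n`). -/

/-- The transition matrix `M_p = M1^{p_n} M3^{p_n'} M2^{q_n} ⋯ M1^{p_1} M3^{p_1'} M2^{q_1}`. -/
def Mp (n : ℕ) (P P' Q : Fin n → ℕ) : Matrix (Fin 3) (Fin 3) ℝ :=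
  ((List.finRange n).map fun i => M1 ^ P i.rev * M3 ^ P' i.rev * M2 ^ Q i.rev).prod

/-- Membership of the tuple `p` in `I_n`. -/
def memI (n : ℕ) (P P' Q : Fin n → ℕ) : Prop :=
  (∀ i, 0 < Q i) ∧ (∀ i, 0 < P i + P' i) ∧ (∃ j, 0 < P j) ∧ (∃ k, 0 < P' k)

/-- Finite continued fraction: `cf [a₁, …, a_m] x = 1/(a₁ + 1/(a₂ + ⋯ + 1/(a_m + x)))`. -/
def cf (l : List ℕ) (x : ℝ) : ℝ := l.foldr (fun a y => 1 / (a + y)) x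

/-- The (0-indexed) block index `k(j+1) - 1 = n - 1 - (j mod n)` used at step `j + 1`. -/
def blk (n : ℕ) (hn : 0 < n) (j : ℕ) : Fin n :=
  ⟨n - 1 - j % n, lt_of_le_of_lt (Nat.sub_le _ _) (Nat.sub_lt hn one_pos)⟩

/-- The sequence `(a₁, …, a_{2n}) = (p_n + p_n', q_n, …, p_1 + p_1', q_1)` as a list. -/
def aList (n : ℕ) (hn : 0 < n) (P P' Q : Fin n → ℕ) : List ℕ :=
  (List.range n).flatMap fun i => [P (blk n hn i) + P' (blk n hn i), Q (blk n hn i)]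

/-- `isH0 n hn P P' Q h0` says that `h0` is the number `h_{p,0}`: a real number in `(0,1)`
that is a fixed point of `x ↦ 1/(a₁ + 1/(a₂ + ⋯ + 1/(a_{2n} + x)))` (there is exactly one). -/
def isH0 (n : ℕ) (hn : 0 < n) (P P' Q : Fin n → ℕ) (h0 : ℝ) : Prop :=
  h0 ∈ Set.Ioo (0 : ℝ) 1 ∧ cf (aList n hn P P' Q) h0 = h0

/-- The pair `(w_{p,j}, h_{p,j})`, with `w_{p,0} = 1`, `h_{p,0} = h0`, and for `j ≥ 1`:
`w_{p,j} = w_{p,j-1} − (p_{k(j)} + p'_{k(j)}) h_{p,j-1}`, `h_{p,j} = h_{p,j-1} − q_{k(j)} w_{p,j}`. -/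
def wh (n : ℕ) (hn : 0 < n) (P P' Q : Fin n → ℕ) (h0 : ℝ) : ℕ → ℝ × ℝ
  | 0 => (1, h0)
  | j + 1 =>
    let prev := wh n hn P P' Q h0 j
    let b := blk n hn j
    let w := prev.1 - ((P b : ℝ) + (P' b : ℝ)) * prev.2
    (w, prev.2 - (Q b : ℝ) * w)

/-- The width `w_{p,j}`. -/
def wseq (n : ℕ) (hn : 0 < n) (P P' Q : Fin n → ℕ) (h0 : ℝ) (j : ℕ) : ℝ :=
  (wh n hn P P' Q h0 j).1

/-- The height `h_{p,j}`. -/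
def hseq (n : ℕ) (hn : 0 < n) (P P' Q : Fin n → ℕ) (h0 : ℝ) (j : ℕ) : ℝ :=
  (wh n hn P P' Q h0 j).2

/-- The split ratio `s_p = Σ_{i=0}^∞ p_{k(i+1)} h_{p,i}`. -/
def splitRatio (n : ℕ) (hn : 0 < n) (P P' Q : Fin n → ℕ) (h0 : ℝ) : ℝ :=
  ∑' i : ℕ, (P (blk n hn i) : ℝ) * hseq n hn P P' Q h0 i

/-- The reindexing realizing the shift `T`: the tuple `T(p)` is given by the functions
`P ∘ shiftIdx n hn`, `P' ∘ shiftIdx n hn`, `Q ∘ shiftIdx n hn`. -/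
def shiftIdx (n : ℕ) (hn : 0 < n) (i : Fin n) : Fin n :=
  ⟨(i.val + (n - 1)) % n, Nat.mod_lt _ hn⟩

lemma cf_nil (x : ℝ) : cf [] x = x := rfl

lemma cf_cons (a : ℕ) (t : List ℕ) (x : ℝ) : cf (a :: t) x = 1 / ((a : ℝ) + cf t x) := rfl

lemma cf_pos {l : List ℕ} (hl : ∀ a ∈ l, 1 ≤ a) {x : ℝ} (hx : 0 < x) : 0 < cf l x := by
  induction l with
  | nil => exact hx
  | cons a t ih =>
    have ha : (1 : ℝ) ≤ (a : ℝ) := by exact_mod_cast hl a (by simp)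
    have ht : 0 < cf t x := ih fun b hb => hl b (by simp [hb])
    rw [cf_cons]
    exact div_pos one_pos (by linarith)

lemma cf_lt_one {a : ℕ} {t : List ℕ} {x : ℝ} (ha : 1 ≤ a) (ht : 0 < cf t x) :
    cf (a :: t) x < 1 := by
  have ha' : (1 : ℝ) ≤ (a : ℝ) := by exact_mod_cast ha
  rw [cf_cons, div_lt_one (by linarith)]
  linarith

lemma cf_dist {l : List ℕ} (hl : ∀ a ∈ l, 1 ≤ a) {x y : ℝ} (hx : 0 < x) (hy : 0 < y) :
    |cf l x - cf l y| ≤ |x - y| := by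
  induction l with
  | nil => exact le_refl _
  | cons a t ih =>
    have ht : ∀ b ∈ t, 1 ≤ b := fun b hb => hl b (by simp [hb])
    have ha : (1 : ℝ) ≤ (a : ℝ) := by exact_mod_cast hl a (by simp)
    have hX : 0 < cf t x := cf_pos ht hx
    have hY : 0 < cf t y := cf_pos ht hy
    have hdx : ((a : ℝ) + cf t x) ≠ 0 := by linarith
    have hdy : ((a : ℝ) + cf t y) ≠ 0 := by linarith
    have key : cf (a :: t) x - cf (a :: t) y =
        (cf t y - cf t x) / (((a : ℝ) + cf t x) * ((a : ℝ) + cf t y)) := by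
      rw [cf_cons, cf_cons, div_sub_div _ _ hdx hdy]
      congr 1
      ring
    have hDpos : 0 < ((a : ℝ) + cf t x) * ((a : ℝ) + cf t y) := by nlinarith
    have hD : 1 ≤ ((a : ℝ) + cf t x) * ((a : ℝ) + cf t y) := by nlinarith
    calc |cf (a :: t) x - cf (a :: t) y|
        = |cf t y - cf t x| / (((a : ℝ) + cf t x) * ((a : ℝ) + cf t y)) := by
          rw [key, abs_div, abs_of_pos hDpos]
      _ ≤ |cf t y - cf t x| := div_le_self (abs_nonneg _) hD
      _ = |cf t x - cf t y| := abs_sub_comm _ _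
      _ ≤ |x - y| := ih ht

lemma cf_dist_lt {a : ℕ} {t : List ℕ} (hl : ∀ b ∈ a :: t, 1 ≤ b) {x y : ℝ}
    (hx : 0 < x) (hy : 0 < y) (hxy : x ≠ y) :
    |cf (a :: t) x - cf (a :: t) y| < |x - y| := by
  have ht : ∀ b ∈ t, 1 ≤ b := fun b hb => hl b (by simp [hb])
  have ha : (1 : ℝ) ≤ (a : ℝ) := by exact_mod_cast hl a (by simp)
  have hX : 0 < cf t x := cf_pos ht hx
  have hY : 0 < cf t y := cf_pos ht hy
  have hdx : ((a : ℝ) + cf t x) ≠ 0 := by linarith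
  have hdy : ((a : ℝ) + cf t y) ≠ 0 := by linarith
  have hxy' : 0 < |x - y| := abs_pos.mpr (sub_ne_zero.mpr hxy)
  have key : cf (a :: t) x - cf (a :: t) y =
      (cf t y - cf t x) / (((a : ℝ) + cf t x) * ((a : ℝ) + cf t y)) := by
    rw [cf_cons, cf_cons, div_sub_div _ _ hdx hdy]
    congr 1
    ring
  have hDpos : 0 < ((a : ℝ) + cf t x) * ((a : ℝ) + cf t y) := by nlinarith
  have hD : 1 < ((a : ℝ) + cf t x) * ((a : ℝ) + cf t y) := by nlinarith
  have h1 : |cf (a :: t) x - cf (a :: t) y| =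
      |cf t x - cf t y| / (((a : ℝ) + cf t x) * ((a : ℝ) + cf t y)) := by
    rw [key, abs_div, abs_of_pos hDpos, abs_sub_comm]
  rcases eq_or_ne (cf t x) (cf t y) with h | h
  · rw [h1, h]
    simpa using hxy'
  · calc |cf (a :: t) x - cf (a :: t) y|
        = |cf t x - cf t y| / (((a : ℝ) + cf t x) * ((a : ℝ) + cf t y)) := h1
      _ < |cf t x - cf t y| := div_lt_self (abs_pos.mpr (sub_ne_zero.mpr h)) hD
      _ ≤ |x - y| := cf_dist ht hx hy

lemma cf_fixed_unique {l : List ℕ} (hl : ∀ a ∈ l, 1 ≤ a) (hne : l ≠ [])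
    {x y : ℝ} (hx : 0 < x) (hy : 0 < y) (hfx : cf l x = x) (hfy : cf l y = y) : x = y := by
  by_contra hxy
  obtain ⟨a, t, rfl⟩ := List.exists_cons_of_ne_nil hne
  have := cf_dist_lt hl hx hy hxy
  rw [hfx, hfy] at this
  exact lt_irrefl _ this

lemma flatMap_pair_length (f g : ℕ → ℕ) (l : List ℕ) :
    (l.flatMap fun x => [f x, g x]).length = 2 * l.length := by
  induction l with
  | nil => rfl
  | cons a t ih =>
    simp only [List.flatMap_cons, List.length_append, List.length_cons, ih]
    simp
    ring

lemma flatMap_pair_drop (f g : ℕ → ℕ) (l : List ℕ) (i : ℕ) :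
    (l.flatMap fun x => [f x, g x]).drop (2 * i) = (l.drop i).flatMap fun x => [f x, g x] := by
  induction l generalizing i with
  | nil => simp
  | cons a t ih =>
    cases i with
    | zero => simp
    | succ i =>
      rw [show 2 * (i + 1) = (2 * i) + 1 + 1 from by ring]
      simp only [List.flatMap_cons, List.cons_append, List.singleton_append,
        List.drop_succ_cons]
      exact ih i

lemma core (n : ℕ) (hn : 0 < n) (P P' Q : Fin n → ℕ) (h0 : ℝ)
    (hQ : ∀ i, 0 < Q i) (hPP' : ∀ i, 0 < P i + P' i) (hh0 : isH0 n hn P P' Q h0) :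
    (∀ j, 0 < hseq n hn P P' Q h0 j) ∧
    Summable (fun i => ((P (blk n hn i) + P' (blk n hn i) : ℕ) : ℝ) * hseq n hn P P' Q h0 i) ∧
    (∑' i : ℕ, ((P (blk n hn i) + P' (blk n hn i) : ℕ) : ℝ) * hseq n hn P P' Q h0 i) = 1 := by
  obtain ⟨⟨hh0pos, hh0lt⟩, hfix⟩ := hh0
  set L := aList n hn P P' Q with hLdef
  have hLlen : L.length = 2 * n := by
    rw [hLdef, aList, flatMap_pair_length]
    simp
  have hLpos : 0 < L.length := by omega
  have hL1 : ∀ a ∈ L, 1 ≤ a := by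
    intro a ha
    rw [hLdef, aList, List.mem_flatMap] at ha
    obtain ⟨i, -, hi⟩ := ha
    simp only [List.mem_cons, List.mem_singleton, List.not_mem_nil, or_false] at hi
    rcases hi with h | h
    · have := hPP' (blk n hn i); omega
    · have := hQ (blk n hn i); omega
  set y : ℕ → ℝ := fun m => cf (L.drop (m % L.length)) h0 with hydef
  have hy_mod : ∀ m, y m = y (m % L.length) := by
    intro m
    simp only [hydef]
    rw [Nat.mod_mod_of_dvd m dvd_rfl]
  have hy_pos : ∀ m, 0 < y m := fun m =>
    cf_pos (fun a ha => hL1 a (List.drop_subset _ _ ha)) hh0pos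
  have hy0 : y 0 = h0 := by
    simp only [hydef, Nat.zero_mod, List.drop_zero]
    exact hfix
  have hy_lt1 : ∀ m, y m < 1 := by
    intro m
    have hr : m % L.length < L.length := Nat.mod_lt _ hLpos
    have hdrop := List.drop_eq_getElem_cons hr
    simp only [hydef]
    rw [hdrop]
    exact cf_lt_one (hL1 _ (List.getElem_mem _))
      (cf_pos (fun a ha => hL1 a (List.drop_subset _ _ ha)) hh0pos)
  set A : ℕ → ℕ := fun m => L.getD (m % L.length) 1 with hAdef
  have hA_eq : ∀ m (h : m % L.length < L.length), A m = L[m % L.length]'h := by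
    intro m h
    simp only [hAdef]
    rw [List.getD_eq_getElem?_getD, List.getElem?_eq_getElem h]
    rfl
  have hy_rec : ∀ m, y m * ((A m : ℝ) + y (m + 1)) = 1 := by
    intro m
    have hr : m % L.length < L.length := Nat.mod_lt _ hLpos
    have hdrop := List.drop_eq_getElem_cons hr
    have hm1 : (m + 1) % L.length = (m % L.length + 1) % L.length := by
      conv_lhs => rw [Nat.add_mod]
      congr 1
      congr 1
      rw [Nat.mod_eq_of_lt (by omega)]
    have htail : cf (L.drop (m % L.length + 1)) h0 = y (m + 1) := by
      rcases Nat.lt_or_ge (m % L.length + 1) L.length with hlt | hge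
      swap
      · have heq : m % L.length + 1 = L.length := by omega
        rw [heq, List.drop_length, cf_nil]
        simp only [hydef]
        rw [hm1, heq, Nat.mod_self, List.drop_zero]
        exact hfix.symm
      · simp only [hydef]
        rw [hm1, Nat.mod_eq_of_lt hlt]
    have hym : y m = 1 / ((A m : ℝ) + y (m + 1)) := by
      have h1 : y m = cf (L.drop (m % L.length)) h0 := rfl
      rw [h1, hdrop, cf_cons, htail, hA_eq m hr]
    have hden : 0 < (A m : ℝ) + y (m + 1) :=
      add_pos_of_nonneg_of_pos (Nat.cast_nonneg _) (hy_pos (m + 1))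
    rw [hym]
    field_simp
  have hy_prod : ∀ m, 1 - (A m : ℝ) * y m = y m * y (m + 1) := by
    intro m
    linear_combination (-1 : ℝ) * hy_rec m
  have hLdrop : ∀ i, i < n → L.drop (2 * i) =
      (P (blk n hn i) + P' (blk n hn i)) :: Q (blk n hn i) :: L.drop (2 * i + 2) := by
    intro i hi
    have h1 : (List.range n).drop i = i :: (List.range n).drop (i + 1) := by
      rw [List.drop_eq_getElem_cons (by simpa using hi)]
      simp
    rw [hLdef, aList, flatMap_pair_drop, h1, List.flatMap_cons, ← flatMap_pair_drop]
    simp [Nat.mul_succ]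
  have hblk : ∀ j, blk n hn (j % n) = blk n hn j := by
    intro j
    apply Fin.ext
    show n - 1 - (j % n) % n = n - 1 - j % n
    rw [Nat.mod_mod_of_dvd j dvd_rfl]
  have hA0 : ∀ j, A (2 * j) = P (blk n hn j) + P' (blk n hn j) := by
    intro j
    have hi : j % n < n := Nat.mod_lt _ hn
    have hmod : (2 * j) % L.length = 2 * (j % n) := by
      rw [hLlen, Nat.mul_mod_mul_left]
    have h2 : A (2 * j) = ((L.drop (2 * (j % n)))[0]?).getD 1 := by
      rw [List.getElem?_drop]
      simp only [Nat.add_zero, hAdef, hmod]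
      rw [List.getD_eq_getElem?_getD]
    rw [h2, hLdrop (j % n) hi]
    simp [hblk j]
  have hA1 : ∀ j, A (2 * j + 1) = Q (blk n hn j) := by
    intro j
    have hi : j % n < n := Nat.mod_lt _ hn
    have hmod : (2 * j + 1) % L.length = 2 * (j % n) + 1 := by
      rw [hLlen]
      have h1 : 2 * j + 1 = 2 * (j % n) + 1 + (j / n) * (2 * n) := by
        conv_lhs => rw [← Nat.div_add_mod j n]
        ring
      rw [h1, Nat.add_mul_mod_self_right, Nat.mod_eq_of_lt (by omega)]
    have h2 : A (2 * j + 1) = ((L.drop (2 * (j % n)))[1]?).getD 1 := by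
      rw [List.getElem?_drop]
      simp only [hAdef, hmod]
      rw [List.getD_eq_getElem?_getD]
    rw [h2, hLdrop (j % n) hi]
    simp [hblk j]
  have hwrec : ∀ j, wseq n hn P P' Q h0 (j + 1) =
      wseq n hn P P' Q h0 j
        - ((P (blk n hn j) : ℝ) + (P' (blk n hn j) : ℝ)) * hseq n hn P P' Q h0 j :=
    fun j => rfl
  have hhrec : ∀ j, hseq n hn P P' Q h0 (j + 1) =
      hseq n hn P P' Q h0 j - (Q (blk n hn j) : ℝ) * wseq n hn P P' Q h0 (j + 1) :=
    fun j => rfl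
  have hwh : ∀ j, wseq n hn P P' Q h0 j = (∏ m ∈ Finset.range (2 * j), y m) ∧
      hseq n hn P P' Q h0 j = ∏ m ∈ Finset.range (2 * j + 1), y m := by
    intro j
    induction j with
    | zero =>
      refine ⟨by simp [wseq, wh], ?_⟩
      show (wh n hn P P' Q h0 0).2 = _
      simp [wh, hy0]
    | succ j ih =>
      obtain ⟨ihw, ihh⟩ := ih
      have e0 := hy_prod (2 * j)
      have e1 := hy_prod (2 * j + 1)
      have hc0 : ((A (2 * j) : ℕ) : ℝ) = (P (blk n hn j) : ℝ) + (P' (blk n hn j) : ℝ) := by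
        rw [hA0 j]; push_cast; ring
      have hc1 : ((A (2 * j + 1) : ℕ) : ℝ) = (Q (blk n hn j) : ℝ) := by rw [hA1 j]
      have hw1 : wseq n hn P P' Q h0 (j + 1) = ∏ m ∈ Finset.range (2 * (j + 1)), y m := by
        rw [hwrec j, ihw, ihh, ← hc0,
          show 2 * (j + 1) = (2 * j + 1) + 1 from by ring]
        simp only [Finset.prod_range_succ]
        linear_combination (∏ m ∈ Finset.range (2 * j), y m) * e0
      refine ⟨hw1, ?_⟩
      rw [hhrec j, ihh, hw1, ← hc1,
        show 2 * (j + 1) + 1 = ((2 * j + 1) + 1) + 1 from by ring,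
        show 2 * (j + 1) = (2 * j + 1) + 1 from by ring]
      simp only [Finset.prod_range_succ]
      linear_combination ((∏ m ∈ Finset.range (2 * j), y m) * y (2 * j)) * e1
  have hprod_pos : ∀ N, 0 < ∏ m ∈ Finset.range N, y m :=
    fun N => Finset.prod_pos fun m _ => hy_pos m
  have hpos : ∀ j, 0 < hseq n hn P P' Q h0 j := by
    intro j
    rw [(hwh j).2]
    exact hprod_pos _
  have hne : (Finset.range L.length).Nonempty := Finset.nonempty_range_iff.mpr (by omega)
  set C : ℝ := (Finset.range L.length).sup' hne y with hCdef
  have hCy : ∀ m, y m ≤ C := by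
    intro m
    rw [hy_mod m]
    exact Finset.le_sup' y (Finset.mem_range.mpr (Nat.mod_lt _ hLpos))
  have hC1 : C < 1 := (Finset.sup'_lt_iff hne).mpr fun m _ => hy_lt1 m
  have hC0 : 0 ≤ C := le_trans (hy_pos 0).le (hCy 0)
  have hprod_le : ∀ N, (∏ m ∈ Finset.range N, y m) ≤ C ^ N := by
    intro N
    calc (∏ m ∈ Finset.range N, y m) ≤ ∏ _m ∈ Finset.range N, C :=
          Finset.prod_le_prod (fun m _ => (hy_pos m).le) fun m _ => hCy m
      _ = C ^ N := by simp
  have hWtend : Filter.Tendsto (fun j => wseq n hn P P' Q h0 j) Filter.atTop (nhds 0) := by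
    refine squeeze_zero (g := fun j => C ^ (2 * j)) (fun j => ?_) (fun j => ?_) ?_
    · rw [(hwh j).1]; exact (hprod_pos _).le
    · rw [(hwh j).1]; exact hprod_le _
    · have h2 : Filter.Tendsto (fun j : ℕ => 2 * j) Filter.atTop Filter.atTop :=
        Filter.tendsto_atTop_atTop_of_monotone (fun a b h => by omega) fun b => ⟨b, by omega⟩
      exact (tendsto_pow_atTop_nhds_zero_of_lt_one hC0 hC1).comp h2
  set g : ℕ → ℝ := fun i => ((P (blk n hn i) + P' (blk n hn i) : ℕ) : ℝ)
      * hseq n hn P P' Q h0 i with hgdef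
  have hg_eq : ∀ i, g i = wseq n hn P P' Q h0 i - wseq n hn P P' Q h0 (i + 1) := by
    intro i
    simp only [hgdef]
    rw [hwrec i]
    push_cast
    ring
  have hg_nonneg : ∀ i, 0 ≤ g i := fun i => mul_nonneg (Nat.cast_nonneg _) (hpos i).le
  have hW0 : wseq n hn P P' Q h0 0 = 1 := rfl
  have hWnonneg : ∀ N, 0 ≤ wseq n hn P P' Q h0 N := by
    intro N
    rw [(hwh N).1]
    exact (hprod_pos _).le
  have hsum_range : ∀ N, ∑ i ∈ Finset.range N, g i = 1 - wseq n hn P P' Q h0 N := by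
    intro N
    calc ∑ i ∈ Finset.range N, g i
        = ∑ i ∈ Finset.range N, (wseq n hn P P' Q h0 i - wseq n hn P P' Q h0 (i + 1)) :=
          Finset.sum_congr rfl fun i _ => hg_eq i
      _ = wseq n hn P P' Q h0 0 - wseq n hn P P' Q h0 N := Finset.sum_range_sub' _ _
      _ = 1 - wseq n hn P P' Q h0 N := by rw [hW0]
  have hgsummable : Summable g := by
    refine summable_of_sum_range_le (c := 1) hg_nonneg fun N => ?_
    rw [hsum_range N]
    have := hWnonneg N
    linarith
  have htsum : (∑' i, g i) = 1 := by
    have h1 := hgsummable.hasSum.tendsto_sum_nat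
    have h3 := hWtend.const_sub (1 : ℝ)
    rw [sub_zero] at h3
    have h2 : Filter.Tendsto (fun N => ∑ i ∈ Finset.range N, g i) Filter.atTop (nhds 1) := by
      rw [show (fun N => ∑ i ∈ Finset.range N, g i)
          = fun N => 1 - wseq n hn P P' Q h0 N from funext hsum_range]
      exact h3
    exact tendsto_nhds_unique h1 h2
  exact ⟨hpos, hgsummable, htsum⟩


lemma aList_swap (n : ℕ) (hn : 0 < n) (P P' Q : Fin n → ℕ) :
    aList n hn P' P Q = aList n hn P P' Q := by
  unfold aList
  congr 1
  funext i
  rw [Nat.add_comm]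

lemma wh_swap (n : ℕ) (hn : 0 < n) (P P' Q : Fin n → ℕ) (h0 : ℝ) (j : ℕ) :
    wh n hn P' P Q h0 j = wh n hn P P' Q h0 j := by
  induction j with
  | zero => rfl
  | succ j ih =>
    simp only [wh, ih]
    rw [Prod.mk.injEq]
    constructor <;> ring

/-- `s_p + s_{f(p)} = 1`, where `f(p)` is the flip of `p`
(obtained by exchanging `p_i` and `p_i'` for all `i`). -/
theorem stmt10 (n : ℕ) (hn : 0 < n) (P P' Q : Fin n → ℕ) (hI : memI n P P' Q)
    (h0 h0' : ℝ) (hh0 : isH0 n hn P P' Q h0) (hh0' : isH0 n hn P' P Q h0') :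
    splitRatio n hn P P' Q h0 + splitRatio n hn P' P Q h0' = 1 := by
  obtain ⟨hQ, hPP', -, -⟩ := hI
  obtain ⟨hpos, hsum, htsum⟩ := core n hn P P' Q h0 hQ hPP' hh0
  have hLlen : (aList n hn P P' Q).length = 2 * n := by
    rw [aList, flatMap_pair_length]
    simp
  have hLne : aList n hn P P' Q ≠ [] := by
    intro h
    rw [h] at hLlen
    simp at hLlen
    omega
  have hL1 : ∀ a ∈ aList n hn P P' Q, 1 ≤ a := by
    intro a ha
    rw [aList, List.mem_flatMap] at ha
    obtain ⟨i, -, hi⟩ := ha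
    simp only [List.mem_cons, List.mem_singleton, List.not_mem_nil, or_false] at hi
    rcases hi with h | h
    · have := hPP' (blk n hn i); omega
    · have := hQ (blk n hn i); omega
  have h0'eq : h0' = h0 := by
    have hfix' : cf (aList n hn P P' Q) h0' = h0' := by
      rw [← aList_swap n hn P P' Q]
      exact hh0'.2
    exact cf_fixed_unique hL1 hLne hh0'.1.1 hh0.1.1 hfix' hh0.2
  have hseq_swap : ∀ i, hseq n hn P' P Q h0' i = hseq n hn P P' Q h0 i := by
    intro i
    rw [h0'eq]
    unfold hseq
    rw [wh_swap]
  have hle1 : ∀ i, (P (blk n hn i) : ℝ)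
      ≤ ((P (blk n hn i) + P' (blk n hn i) : ℕ) : ℝ) := by
    intro i
    exact_mod_cast Nat.le_add_right _ _
  have hle2 : ∀ i, (P' (blk n hn i) : ℝ)
      ≤ ((P (blk n hn i) + P' (blk n hn i) : ℕ) : ℝ) := by
    intro i
    exact_mod_cast Nat.le_add_left _ _
  have hu : Summable (fun i => (P (blk n hn i) : ℝ) * hseq n hn P P' Q h0 i) := by
    refine Summable.of_nonneg_of_le
      (fun i => mul_nonneg (Nat.cast_nonneg _) (hpos i).le) (fun i => ?_) hsum
    exact mul_le_mul_of_nonneg_right (hle1 i) (hpos i).le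
  have hu' : Summable (fun i => (P' (blk n hn i) : ℝ) * hseq n hn P P' Q h0 i) := by
    refine Summable.of_nonneg_of_le
      (fun i => mul_nonneg (Nat.cast_nonneg _) (hpos i).le) (fun i => ?_) hsum
    exact mul_le_mul_of_nonneg_right (hle2 i) (hpos i).le
  have hsr' : splitRatio n hn P' P Q h0'
      = ∑' i, (P' (blk n hn i) : ℝ) * hseq n hn P P' Q h0 i := by
    unfold splitRatio
    exact tsum_congr fun i => by rw [hseq_swap i]
  rw [hsr', show splitRatio n hn P P' Q h0
      = ∑' i, (P (blk n hn i) : ℝ) * hseq n hn P P' Q h0 i from rfl,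
    ← Summable.tsum_add hu hu', ← htsum]
  exact tsum_congr fun i => by push_cast; ring
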